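/- arXiv:2509.22213 — 4 statements merged into one kernel-verified Lean document; each statement's English description precedes it below -/
import Mathlib

section
/- Let M be an ex-post mechanism with continuous output distributions (each M(X) has a density with respect to Lebesgue measure on 𝒴 × ℝ≥0) that satisfies pure ex-post privacy, i.e. for all neighbouring datasets X ∼ X', with probability 1 over (y, ε) ∼ M(X) one has p_{M(X)}(y, ε) ≤ e^{ε} · p_{M(X')}(y, ε). Let f be a randomised function from 𝒴 × ℝ≥0 to 𝒴' with continuous output distributions, and let M' = f ⊙ M be the post-processed mechanism whose output of interest is f applied to the output of M and whose returned privacy bound equals that of M. Then M' satisfies pure ex-post privacy: for all neighbouring X ∼ X', with probability 1 over (y', ε) ∼ M'(X), p_{M'(X)}(y', ε) ≤ e^{ε} · p_{M'(X')}(y', ε). -/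
/-!
Pure ex-post privacy at `X ∼ X'` amounts to the domination `M X ≤ e^ε · M X'` of measures, where
`e^ε · ν` is `ν` reweighted by the density `z ↦ exp z.2`. Post-processing `ν ↦ ν.bind κ` is
monotone in `ν`, and because `κ` passes the privacy bound through unchanged it commutes with this
reweighting, so `M' X = (M X).bind κ ≤ (e^ε · M X').bind κ = e^ε · M' X'`.
-/

open MeasureTheory ProbabilityTheory
open scoped NNReal ENNReal

namespace MeasureTheory

variable {α β : Type*} [MeasurableSpace α] [MeasurableSpace β]

lemma ae_le_of_withDensity_le {μ : Measure α} [SigmaFinite μ] {f g : α → ℝ≥0∞}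
    (hf : Measurable f) (h : μ.withDensity f ≤ μ.withDensity g) : f ≤ᵐ[μ] g :=
  ae_le_of_forall_setLIntegral_le_of_sigmaFinite hf fun s hs _ => by
    simpa only [withDensity_apply _ hs] using h s

lemma withDensity_ofReal_setOf_lt_eq_zero_iff {μ : Measure α} {p r : α → ℝ}
    (hp : Measurable p) :
    μ.withDensity (fun z => ENNReal.ofReal (p z)) {z | r z < p z} = 0 ↔
      ∀ᵐ z ∂μ, ENNReal.ofReal (p z) ≤ ENNReal.ofReal (r z) := by
  rw [measure_eq_zero_iff_ae_notMem, ae_withDensity_iff hp.ennreal_ofReal]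
  refine Filter.eventually_congr (Filter.Eventually.of_forall fun z => ?_)
  simp only [Set.mem_ofPred_eq, ne_eq, ENNReal.ofReal_eq_zero, not_le, not_lt,
    ENNReal.ofReal_le_ofReal_iff']
  exact ⟨fun h => (lt_or_ge 0 (p z)).imp h id, fun h hpos => h.resolve_right hpos.not_ge⟩

lemma le_withDensity_of_measure_setOf_mul_lt_eq_zero {μ : Measure α} {p q c : α → ℝ}
    (hp : Measurable p) (hq : Measurable q) (hc : Measurable c) (hc0 : ∀ z, 0 ≤ c z)
    (h : μ.withDensity (fun z => ENNReal.ofReal (p z)) {z | c z * q z < p z} = 0) :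
    μ.withDensity (fun z => ENNReal.ofReal (p z)) ≤
      (μ.withDensity fun z => ENNReal.ofReal (q z)).withDensity fun z => ENNReal.ofReal (c z) := by
  rw [← withDensity_mul μ hq.ennreal_ofReal hc.ennreal_ofReal]
  refine withDensity_mono ?_
  filter_upwards [(withDensity_ofReal_setOf_lt_eq_zero_iff hp).1 h] with z hz
  rwa [Pi.mul_apply, ← ENNReal.ofReal_mul' (hc0 z), mul_comm]

lemma measure_setOf_mul_lt_eq_zero_of_le_withDensity {μ : Measure α} [SigmaFinite μ]
    {p q c : α → ℝ} (hp : Measurable p) (hq : Measurable q) (hc : Measurable c)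
    (hc0 : ∀ z, 0 ≤ c z)
    (h : μ.withDensity (fun z => ENNReal.ofReal (p z)) ≤
      (μ.withDensity fun z => ENNReal.ofReal (q z)).withDensity fun z => ENNReal.ofReal (c z)) :
    μ.withDensity (fun z => ENNReal.ofReal (p z)) {z | c z * q z < p z} = 0 := by
  rw [← withDensity_mul μ hq.ennreal_ofReal hc.ennreal_ofReal] at h
  rw [withDensity_ofReal_setOf_lt_eq_zero_iff hp]
  filter_upwards [ae_le_of_withDensity_le hp.ennreal_ofReal h] with z hz
  rwa [Pi.mul_apply, ← ENNReal.ofReal_mul' (hc0 z), mul_comm] at hz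

namespace Measure

lemma bind_mono_left {ν ν' : Measure α} (κ : Kernel α β) (h : ν ≤ ν') :
    ν.bind κ ≤ ν'.bind κ :=
  Measure.le_iff.2 fun s hs => by
    simp only [bind_apply hs κ.aemeasurable]
    exact lintegral_mono' h le_rfl

lemma withDensity_bind_eq_bind_withDensity (ν : Measure α) (κ : Kernel α β)
    {g : α → ℝ≥0∞} {h : β → ℝ≥0∞} (hg : Measurable g) (hh : Measurable h)
    (hκ : ∀ a, ∀ᵐ b ∂κ a, h b = g a) :
    (ν.withDensity g).bind κ = (ν.bind κ).withDensity h := by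
  ext s hs
  rw [bind_apply hs κ.aemeasurable, withDensity_apply _ hs,
    lintegral_withDensity_eq_lintegral_mul _ hg (κ.measurable_coe hs),
    ← lintegral_indicator hs, lintegral_bind κ.aemeasurable (hh.indicator hs).aemeasurable]
  refine lintegral_congr fun a => ?_
  rw [lintegral_indicator hs, setLIntegral_congr_fun_ae hs ((hκ a).mono fun b hb _ => hb),
    setLIntegral_const]
  rfl

end Measure

end MeasureTheory

theorem pure_ex_post_privacy_post_processing_general
    {𝒳 Y Y' : Type*} [MeasurableSpace Y] [MeasurableSpace Y']
    (Neighbor : 𝒳 → 𝒳 → Prop)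
    (μ : Measure (Y × ℝ≥0))
    (μ' : Measure (Y' × ℝ≥0)) [SigmaFinite μ']
    (M : 𝒳 → Measure (Y × ℝ≥0))
    (p : 𝒳 → Y × ℝ≥0 → ℝ)
    (hp_meas : ∀ X, Measurable (p X))
    (hdens : ∀ X, M X = μ.withDensity fun z => ENNReal.ofReal (p X z))
    (f : ProbabilityTheory.Kernel (Y × ℝ≥0) Y') [ProbabilityTheory.IsMarkovKernel f]
    (M' : 𝒳 → Measure (Y' × ℝ≥0))
    (hM' : ∀ X, M' X = (M X).bind fun z => (f z).map fun y' => (y', z.2))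
    (p' : 𝒳 → Y' × ℝ≥0 → ℝ)
    (hp'_meas : ∀ X, Measurable (p' X))
    (hdens' : ∀ X, M' X = μ'.withDensity fun z => ENNReal.ofReal (p' X z))
    (hpure : ∀ X X', Neighbor X X' →
      M X {z | Real.exp (z.2 : ℝ) * p X' z < p X z} = 0) :
    ∀ X X', Neighbor X X' →
      M' X {z | Real.exp (z.2 : ℝ) * p' X' z < p' X z} = 0 := by
  intro X X' hXX'
  let κ : Kernel (Y × ℝ≥0) (Y' × ℝ≥0) := f ×ₖ Kernel.deterministic Prod.snd measurable_snd
  have hκ : ∀ z, κ z = (f z).map fun y' => (y', z.2) := fun z => by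
    rw [Kernel.prod_apply, Kernel.deterministic_apply, Measure.prod_dirac]
  have hM'κ : ∀ X, M' X = (M X).bind κ := fun X => by
    rw [hM', ← funext hκ]
  have hκ_snd : ∀ z, ∀ᵐ z' ∂κ z,
      ENNReal.ofReal (Real.exp z'.2) = ENNReal.ofReal (Real.exp z.2) := fun z => by
    rw [hκ, ae_map_iff measurable_prodMk_right.aemeasurable
      (measurableSet_eq_fun (by fun_prop) (by fun_prop))]
    exact Filter.Eventually.of_forall fun _ => rfl
  have hM_le : M X ≤ (M X').withDensity fun z => ENNReal.ofReal (Real.exp z.2) := by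
    have hnull := hpure X X' hXX'
    simp only [hdens] at hnull ⊢
    exact le_withDensity_of_measure_setOf_mul_lt_eq_zero (hp_meas X) (hp_meas X')
      (by fun_prop) (fun _ => (Real.exp_pos _).le) hnull
  have hM'_le : M' X ≤ (M' X').withDensity fun z => ENNReal.ofReal (Real.exp z.2) := by
    rw [hM'κ, hM'κ,
      ← Measure.withDensity_bind_eq_bind_withDensity _ _ (by fun_prop) (by fun_prop) hκ_snd]
    exact Measure.bind_mono_left κ hM_le
  simp only [hdens'] at hM'_le ⊢
  exact measure_setOf_mul_lt_eq_zero_of_le_withDensity (hp'_meas X) (hp'_meas X')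
    (by fun_prop) (fun _ => (Real.exp_pos _).le) hM'_le

/-- Pure ex-post privacy is immune to post-processing by a Markov kernel.
An ex-post mechanism `M` sends a dataset to a probability measure on `Y × ℝ≥0`
(output of interest, returned privacy bound), with density `p X` w.r.t. a common
σ-finite base measure.  Pure ex-post privacy of `M` says that for neighbouring
`X ∼ X'`, with probability 1 over `(y, ε) ∼ M X` one has
`p X (y,ε) ≤ exp ε * p X' (y,ε)`, i.e. the violation set has measure zero.
The post-processed mechanism `M' = f ⊙ M` applies the kernel `f` to the output
of `M` and returns the same privacy bound; it again has densities `p' X` w.r.t.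
a σ-finite base measure.  Then `M'` is pure ex-post private. -/
theorem pure_ex_post_privacy_post_processing
    {𝒳 Y Y' : Type*} [MeasurableSpace Y] [MeasurableSpace Y']
    (Neighbor : 𝒳 → 𝒳 → Prop) (hsymm : Symmetric Neighbor)
    (μ : Measure (Y × ℝ≥0)) [SigmaFinite μ]
    (μ' : Measure (Y' × ℝ≥0)) [SigmaFinite μ']
    (M : 𝒳 → Measure (Y × ℝ≥0)) (hMprob : ∀ X, IsProbabilityMeasure (M X))
    (p : 𝒳 → Y × ℝ≥0 → ℝ)
    (hp_nonneg : ∀ X z, 0 ≤ p X z) (hp_meas : ∀ X, Measurable (p X))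
    (hdens : ∀ X, M X = μ.withDensity fun z => ENNReal.ofReal (p X z))
    (f : ProbabilityTheory.Kernel (Y × ℝ≥0) Y') [ProbabilityTheory.IsMarkovKernel f]
    (M' : 𝒳 → Measure (Y' × ℝ≥0))
    (hM' : ∀ X, M' X = (M X).bind fun z => (f z).map fun y' => (y', z.2))
    (p' : 𝒳 → Y' × ℝ≥0 → ℝ)
    (hp'_nonneg : ∀ X z, 0 ≤ p' X z) (hp'_meas : ∀ X, Measurable (p' X))
    (hdens' : ∀ X, M' X = μ'.withDensity fun z => ENNReal.ofReal (p' X z))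
    (hpure : ∀ X X', Neighbor X X' →
      M X {z | Real.exp (z.2 : ℝ) * p X' z < p X z} = 0) :
    ∀ X X', Neighbor X X' →
      M' X {z | Real.exp (z.2 : ℝ) * p' X' z < p' X z} = 0 :=
  pure_ex_post_privacy_post_processing_general Neighbor μ μ' M p hp_meas hdens f M' hM' p' hp'_meas
    hdens' hpure
end

section
/- Let M be an ex-post mechanism whose returned privacy bound is a deterministic constant: M(X)_ε = ε_c for all datasets X. If M is (ε_c, δ)-probabilistically DP, i.e. for all neighbouring X ∼ X' there exists a measurable set S^δ with Pr(M(X) ∈ S^δ) ≤ δ such that Pr(M(X) ∈ S \ S^δ) ≤ e^{ε_c} · Pr(M(X') ∈ S \ S^δ) for all measurable S, then M is δ-probabilistically ex-post private: for all neighbouring X ∼ X', Pr_{(y,ε)∼M(X)}( ln(p_{M(X)}(y,ε)/p_{M(X')}(y,ε)) > ε ) ≤ δ. -/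
open MeasureTheory
open scoped NNReal ENNReal

/-! On the event `A` where the density ratio exceeds `exp εc`, the set `A \ Sδ` has, by strict
monotonicity of the set integral, strictly more `M X`-mass than `exp εc` times its `M X'`-mass
unless it is null, so the DP inequality makes it null and `M X A ≤ M X Sδ ≤ δ`. Since the
returned bound is `εc` almost surely, the ex-post loss event is contained in `A` up to a null set. -/

namespace MeasureTheory.Measure

variable {α : Type*} [MeasurableSpace α] {μ : Measure α} {f g : α → ℝ≥0∞} {c : ℝ≥0∞}

theorem null_of_withDensity_le_const_mul_of_const_mul_lt {T : Set α}
    (hf : Measurable f) (hc : c ≠ ∞) (hT : MeasurableSet T) (hlt : ∀ z ∈ T, c * g z < f z)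
    (hfin : μ.withDensity f T ≠ ∞) (hle : μ.withDensity f T ≤ c * μ.withDensity g T) :
    μ T = 0 := by
  by_contra hμT
  rw [withDensity_apply _ hT] at hfin hle
  rw [withDensity_apply _ hT, ← lintegral_const_mul' _ _ hc] at hle
  have hfin' : ∫⁻ z in T, c * g z ∂μ ≠ ∞ :=
    ne_top_of_le_ne_top hfin (setLIntegral_mono hf fun z hz => (hlt z hz).le)
  exact (setLIntegral_strict_mono hT hμT hf hfin' (.of_forall hlt)).not_ge hle

theorem withDensity_setOf_const_mul_lt_le [IsFiniteMeasure (μ.withDensity f)]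
    (hf : Measurable f) (hg : Measurable g) (hc : c ≠ ∞) {Sδ : Set α} (hSδ : MeasurableSet Sδ)
    (hdp : ∀ S, MeasurableSet S → μ.withDensity f (S \ Sδ) ≤ c * μ.withDensity g (S \ Sδ)) :
    μ.withDensity f {z | c * g z < f z} ≤ μ.withDensity f Sδ := by
  have hA : MeasurableSet {z | c * g z < f z} := measurableSet_lt (hg.const_mul c) hf
  have hnull : μ ({z | c * g z < f z} \ Sδ) = 0 :=
    null_of_withDensity_le_const_mul_of_const_mul_lt hf hc (hA.diff hSδ) (fun z hz => hz.1)
      (measure_ne_top _ _) (hdp _ hA)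
  calc μ.withDensity f {z | c * g z < f z}
      ≤ μ.withDensity f ({z | c * g z < f z} \ Sδ) + μ.withDensity f Sδ :=
        (measure_mono (Set.subset_sdiff_union _ _)).trans (measure_union_le _ _)
    _ = μ.withDensity f Sδ := by
        rw [withDensity_absolutelyContinuous μ f hnull, zero_add]

end MeasureTheory.Measure

theorem probabilistic_dp_implies_prob_ex_post_private_general
    {𝒳 Y : Type*} [MeasurableSpace Y]
    (Neighbor : 𝒳 → 𝒳 → Prop)
    (μ : Measure (Y × ℝ≥0))
    (M : 𝒳 → Measure (Y × ℝ≥0)) (hMprob : ∀ X, IsProbabilityMeasure (M X))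
    (p : 𝒳 → Y × ℝ≥0 → ℝ)
    (hp_nonneg : ∀ X z, 0 ≤ p X z) (hp_meas : ∀ X, Measurable (p X))
    (hdens : ∀ X, M X = μ.withDensity fun z => ENNReal.ofReal (p X z))
    (εc : ℝ≥0) (hconst : ∀ X, M X {z | z.2 ≠ εc} = 0)
    (δ : ℝ)
    (hpdp : ∀ X X', Neighbor X X' → ∃ Sδ : Set (Y × ℝ≥0), MeasurableSet Sδ ∧
      M X Sδ ≤ ENNReal.ofReal δ ∧
      ∀ S : Set (Y × ℝ≥0), MeasurableSet S →
        M X (S \ Sδ) ≤ ENNReal.ofReal (Real.exp εc) * M X' (S \ Sδ)) :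
    ∀ X X', Neighbor X X' →
      M X {z | Real.exp (z.2 : ℝ) * p X' z < p X z} ≤ ENNReal.ofReal δ := by
  intro X X' hN
  obtain ⟨Sδ, hSδ, hMSδ, hdp⟩ := hpdp X X' hN
  set c := ENNReal.ofReal (Real.exp εc)
  have hloss : M X {z | c * ENNReal.ofReal (p X' z) < ENNReal.ofReal (p X z)} ≤ M X Sδ := by
    have := hMprob X
    rw [hdens X, hdens X'] at hdp
    rw [hdens X] at this ⊢
    exact Measure.withDensity_setOf_const_mul_lt_le (hp_meas X).ennreal_ofReal
      (hp_meas X').ennreal_ofReal ENNReal.ofReal_ne_top hSδ hdp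
  have hsub : {z | Real.exp (z.2 : ℝ) * p X' z < p X z} ⊆
      {z | c * ENNReal.ofReal (p X' z) < ENNReal.ofReal (p X z)} ∪ {z | z.2 ≠ εc} := by
    intro z hz
    by_cases hεc : z.2 = εc
    · left
      rw [Set.mem_ofPred_eq, hεc] at hz
      rw [Set.mem_ofPred_eq, ← ENNReal.ofReal_mul (Real.exp_nonneg _),
        ENNReal.ofReal_lt_ofReal_iff_of_nonneg (mul_nonneg (Real.exp_nonneg _) (hp_nonneg X' z))]
      exact hz
    · exact Or.inr hεc
  calc M X {z | Real.exp (z.2 : ℝ) * p X' z < p X z}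
      ≤ M X {z | c * ENNReal.ofReal (p X' z) < ENNReal.ofReal (p X z)} + M X {z | z.2 ≠ εc} :=
        (measure_mono hsub).trans (measure_union_le _ _)
    _ ≤ ENNReal.ofReal δ := by rw [hconst X, add_zero]; exact hloss.trans hMSδ

/-- If an ex-post mechanism `M` (values in `Y × ℝ≥0`, densities `p X`
w.r.t. a common σ-finite base measure `μ`) returns the deterministic privacy bound
`εc` and is `(εc, δ)`-probabilistically DP (for all neighbours there is a
measurable set `Sδ` with `M X Sδ ≤ δ` such that
`M X (S \ Sδ) ≤ exp εc * M X' (S \ Sδ)` for all measurable `S`), then `M` is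
δ-probabilistically ex-post private: for all neighbours, the probability under
`M X` that `ln(p X (y,ε) / p X' (y,ε)) > ε`, i.e. that
`p X (y,ε) > exp ε * p X' (y,ε)`, is at most δ. -/
theorem probabilistic_dp_implies_prob_ex_post_private
    {𝒳 Y : Type*} [MeasurableSpace Y]
    (Neighbor : 𝒳 → 𝒳 → Prop) (hsymm : Symmetric Neighbor)
    (μ : Measure (Y × ℝ≥0)) [SigmaFinite μ]
    (M : 𝒳 → Measure (Y × ℝ≥0)) (hMprob : ∀ X, IsProbabilityMeasure (M X))
    (p : 𝒳 → Y × ℝ≥0 → ℝ)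
    (hp_nonneg : ∀ X z, 0 ≤ p X z) (hp_meas : ∀ X, Measurable (p X))
    (hdens : ∀ X, M X = μ.withDensity fun z => ENNReal.ofReal (p X z))
    (εc : ℝ≥0) (hconst : ∀ X, M X {z | z.2 ≠ εc} = 0)
    (δ : ℝ) (hδ_nonneg : 0 ≤ δ) (hδ_lt : δ < 1)
    (hpdp : ∀ X X', Neighbor X X' → ∃ Sδ : Set (Y × ℝ≥0), MeasurableSet Sδ ∧
      M X Sδ ≤ ENNReal.ofReal δ ∧
      ∀ S : Set (Y × ℝ≥0), MeasurableSet S →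
        M X (S \ Sδ) ≤ ENNReal.ofReal (Real.exp εc) * M X' (S \ Sδ)) :
    ∀ X X', Neighbor X X' →
      M X {z | Real.exp (z.2 : ℝ) * p X' z < p X z} ≤ ENNReal.ofReal δ :=
  probabilistic_dp_implies_prob_ex_post_private_general Neighbor μ M hMprob p hp_nonneg hp_meas
    hdens εc hconst δ hpdp
end

section
/- Fix a dataset X, a function f : 𝒳 → ℝ with ℓ₂-sensitivity Δ, an RDP order α > 1, and a data-independent privacy-bound selector ℰ producing a strictly increasing sequence ε₁ < ε₂ < ⋯ < ε_K from previous outputs and bounds. Let T_i = αΔ²/(2ε_i). Consider: (i) the sequential precision-weighted Gaussian mechanism, which sets σ₁² = αΔ²/(2ε₁), s̃₁ = f(X) + N(0, σ₁²), ŝ₁ = s̃₁, and for 2 ≤ i ≤ K sets σ_i² = αΔ²/(2(ε_i − ε_{i−1})), samples s̃_i = f(X) + N(0, σ_i²) independently, and outputs precision-weighted values ŝ_i = (Σ_{j=1}^i 1/σ_j²)^{−1} Σ_{j=1}^i s̃_j/σ_j²; and (ii) the Brownian mechanism, which outputs ŝ₁ ∼ N(f(X), T₁) and, for 2 ≤ i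 ≤ K, ŝ_i whose conditional distribution given ŝ_{1:i−1} is N( f(X) + (T_i/T_{i−1})(ŝ_{i−1} − f(X)), (T_{i−1} − T_i)·T_i / T_{i−1} ). Then the joint distribution of (ŝ_{1:K}, ε_{1:K}) is the same for the two mechanisms. -/
open MeasureTheory ProbabilityTheory
open scoped NNReal ENNReal

/-- The sequence of adaptively chosen privacy bounds: `ε_i` is computed by the
data-independent selector `E` from the previous outputs `ŝ_{1:i-1}` and the
previous bounds `ε_{1:i-1}` (0-based indexing). -/
noncomputable def epsSeq (E : List ℝ → List ℝ≥0 → ℝ≥0) (ys : ℕ → ℝ) : ℕ → ℝ≥0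
  | i => E (List.ofFn fun j : Fin i => ys j) (List.ofFn fun j : Fin i => epsSeq E ys j)

/-- Extension of a finite output sequence to `ℕ` (junk `0` beyond `K`). -/
def extendFn {K : ℕ} (v : Fin K → ℝ) : ℕ → ℝ :=
  fun n => if h : n < K then v ⟨n, h⟩ else 0

/-- The joint law of a sequential mechanism given, for each step `n`, the
conditional law `κ n` of the `n`-th output given the previous outputs. -/
noncomputable def seqLaw : (K : ℕ) → ((n : ℕ) → (Fin n → ℝ) → Measure ℝ) →
    Measure (Fin K → ℝ)
  | 0, _ => Measure.dirac fun i => i.elim0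
  | K + 1, κ => (seqLaw K κ).bind fun v => (κ K v).map (Fin.snoc v)

/-- One step of the sequential precision-weighted Gaussian mechanism
(Algorithm 2): step `0` releases `ŝ₁ = s̃₁ = f(X) + N(0, σ₁²)` with
`σ₁² = αΔ²/(2ε₁)`; step `n+1` draws `s̃ = f(X) + N(0, σ²)` with
`σ² = αΔ²/(2(ε_cur − ε_prev))` and returns the precision-weighted value
`ŝ_{n+1} = T_cur * (ŝ_n / T_prev + s̃ / σ²)`, where `T_i = αΔ²/(2ε_i)`
(note `Σ_{j<i} s̃_j/σ_j² = ŝ_{i-1}/T_{i-1}`). -/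
noncomputable def pwKernel (α Δ : ℝ) (E : List ℝ → List ℝ≥0 → ℝ≥0) (m : ℝ) :
    (n : ℕ) → (Fin n → ℝ) → Measure ℝ
  | 0, _ => gaussianReal m
      (Real.toNNReal (α * Δ ^ 2 / (2 * (epsSeq E (fun _ => 0) 0 : ℝ))))
  | n + 1, v =>
    let εprev : ℝ := epsSeq E (extendFn v) n
    let εcur : ℝ := epsSeq E (extendFn v) (n + 1)
    let Tprev := α * Δ ^ 2 / (2 * εprev)
    let Tcur := α * Δ ^ 2 / (2 * εcur)
    let σ2 := α * Δ ^ 2 / (2 * (εcur - εprev))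
    Measure.map (fun s => Tcur * (v (Fin.last n) / Tprev + s / σ2))
      (gaussianReal m σ2.toNNReal)

/-- One step of the Brownian mechanism: with `T_i = αΔ²/(2ε_i)`, step `0`
releases `ŝ₁ ∼ N(f(X), T₁)`, and step `n+1` releases `ŝ_{n+1}` with
conditional law
`N(f(X) + (T_cur/T_prev)(ŝ_n − f(X)), (T_prev − T_cur) T_cur / T_prev)`. -/
noncomputable def brKernel (α Δ : ℝ) (E : List ℝ → List ℝ≥0 → ℝ≥0) (m : ℝ) :
    (n : ℕ) → (Fin n → ℝ) → Measure ℝ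
  | 0, _ => gaussianReal m
      (Real.toNNReal (α * Δ ^ 2 / (2 * (epsSeq E (fun _ => 0) 0 : ℝ))))
  | n + 1, v =>
    let Tprev := α * Δ ^ 2 / (2 * (epsSeq E (extendFn v) n : ℝ))
    let Tcur := α * Δ ^ 2 / (2 * (epsSeq E (extendFn v) (n + 1) : ℝ))
    gaussianReal (m + Tcur / Tprev * (v (Fin.last n) - m))
      (Real.toNNReal ((Tprev - Tcur) * Tcur / Tprev))

/-! Step by step the two mechanisms have the same conditional law. With `T_i = αΔ²/(2ε_i)` the
precisions add up, `1/T_i = 1/T_{i-1} + 1/σ_i²`, so the precision-weighted update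
`ŝ_i = T_i (ŝ_{i-1}/T_{i-1} + s̃_i/σ_i²)` is an affine image of `s̃_i ∼ N(f(X), σ_i²)`, hence
Gaussian with mean `f(X) + (T_i/T_{i-1})(ŝ_{i-1} − f(X))` and variance
`T_i²/σ_i² = (T_{i-1} − T_i) T_i / T_{i-1}`: the Brownian kernel. Equal kernels give equal joint
laws. -/

lemma gaussianReal_map_affine (μ : ℝ) (v : ℝ≥0) (a b : ℝ) :
    (gaussianReal μ v).map (fun s => a * s + b)
      = gaussianReal (a * μ + b) (⟨a ^ 2, sq_nonneg _⟩ * v) := by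
  have : (fun s => a * s + b) = (· + b) ∘ (a * ·) := rfl
  rw [this, ← Measure.map_map (measurable_add_const b) (measurable_const_mul a),
    gaussianReal_map_const_mul, gaussianReal_map_add_const]
  rfl

lemma gaussianReal_map_precision_weighted {m x p q r : ℝ} (hp : p ≠ 0) (hq : q ≠ 0) (hr : 0 < r)
    (hprec : q⁻¹ = p⁻¹ + r⁻¹) :
    (gaussianReal m r.toNNReal).map (fun s => q * (x / p + s / r))
      = gaussianReal (m + q / p * (x - m)) ((p - q) * q / p).toNNReal := by
  have hweight : q / r = 1 - q / p := by
    rw [div_eq_mul_inv, div_eq_mul_inv, eq_sub_of_add_eq' hprec.symm]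
    field_simp
  have hvar : (p - q) * q / p = (q / r) ^ 2 * r := by
    rw [sq, mul_assoc, div_mul_cancel₀ q hr.ne', hweight]
    field_simp
  have hfun : (fun s => q * (x / p + s / r)) = fun s => q / r * s + q / p * x := by
    funext s
    ring
  rw [hfun, gaussianReal_map_affine, hvar]
  congr 1
  · rw [hweight]
    ring
  · rw [Real.toNNReal_mul (sq_nonneg _), Real.toNNReal_of_nonneg (sq_nonneg _)]
    rfl

lemma pwKernel_eq_brKernel {α Δ : ℝ} (hαΔ : 0 < α * Δ ^ 2) {E : List ℝ → List ℝ≥0 → ℝ≥0}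
    (hEpos : ∀ ys : ℕ → ℝ, 0 < epsSeq E ys 0) (hEmono : ∀ ys : ℕ → ℝ, StrictMono (epsSeq E ys))
    (m : ℝ) : pwKernel α Δ E m = brKernel α Δ E m := by
  funext n v
  cases n with
  | zero => rfl
  | succ n =>
    have hprev : (0 : ℝ) < epsSeq E (extendFn v) n :=
      NNReal.coe_pos.mpr <| (hEpos _).trans_le <| (hEmono _).monotone n.zero_le
    have hstep : (epsSeq E (extendFn v) n : ℝ) < epsSeq E (extendFn v) (n + 1) :=
      hEmono _ n.lt_succ_self
    have hcur : (0 : ℝ) < epsSeq E (extendFn v) (n + 1) := hprev.trans hstep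
    exact gaussianReal_map_precision_weighted (by positivity) (by positivity)
      (div_pos hαΔ (by linarith)) (by field_simp; ring)

theorem precision_weighted_eq_brownian_general
    {𝒳 : Type*} (α Δ : ℝ) (hα : 1 < α) (hΔ : 0 < Δ)
    (f : 𝒳 → ℝ)
    (E : List ℝ → List ℝ≥0 → ℝ≥0)
    (hEpos : ∀ ys : ℕ → ℝ, 0 < epsSeq E ys 0)
    (hEmono : ∀ ys : ℕ → ℝ, StrictMono (epsSeq E ys))
    (K : ℕ) (X : 𝒳) :
    Measure.map
        (fun v : Fin K → ℝ => (v, fun i : Fin K => epsSeq E (extendFn v) i))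
        (seqLaw K (pwKernel α Δ E (f X)))
      = Measure.map
        (fun v : Fin K → ℝ => (v, fun i : Fin K => epsSeq E (extendFn v) i))
        (seqLaw K (brKernel α Δ E (f X))) := by
  rw [pwKernel_eq_brKernel (mul_pos (by linarith) (pow_pos hΔ 2)) hEpos hEmono]

/-- For a fixed dataset `X`, a function `f` of ℓ₂-sensitivity
`Δ`, an RDP order `α > 1` and a data-independent privacy-bound selector `E`
producing strictly increasing positive bounds, the joint distribution of
`(ŝ_{1:K}, ε_{1:K})` output by the sequential precision-weighted Gaussian
mechanism (Algorithm 2) coincides with that of the Brownian mechanism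
(Algorithm 3). -/
theorem precision_weighted_eq_brownian
    {𝒳 : Type*} (α Δ : ℝ) (hα : 1 < α) (hΔ : 0 < Δ)
    (Neighbor : 𝒳 → 𝒳 → Prop) (hsymm : Symmetric Neighbor)
    (f : 𝒳 → ℝ) (hsens : ∀ X X', Neighbor X X' → |f X - f X'| ≤ Δ)
    (E : List ℝ → List ℝ≥0 → ℝ≥0)
    (hEpos : ∀ ys : ℕ → ℝ, 0 < epsSeq E ys 0)
    (hEmono : ∀ ys : ℕ → ℝ, StrictMono (epsSeq E ys))
    (K : ℕ) (hK : 0 < K) (X : 𝒳) :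
    Measure.map
        (fun v : Fin K → ℝ => (v, fun i : Fin K => epsSeq E (extendFn v) i))
        (seqLaw K (pwKernel α Δ E (f X)))
      = Measure.map
        (fun v : Fin K → ℝ => (v, fun i : Fin K => epsSeq E (extendFn v) i))
        (seqLaw K (brKernel α Δ E (f X))) :=
  precision_weighted_eq_brownian_general α Δ hα hΔ f E hEpos hEmono K X
end

section
/- Let α > 1 and let M be an α-ex-post RDP mechanism. Fix neighbouring datasets X ∼ X' and a prior probability assignment with p(X | I_prior), p(X' | I_prior) > 0, and for information I let R_I(X, X') = p(X | I)/p(X' | I) denote the Bayes factor, with R_prior the Bayes factor under prior information and R_post the Bayes factor after additionally observing the output (y, ε) of the mechanism. Then ln E_{(y,ε)∼M(X)}[ e^{(1−α)ε} · ( R_post(X, X') / R_prior(X, X') )^{α−1} ] ≤ 0. -/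
open MeasureTheory
open scoped NNReal ENNReal

/-- Bayesian interpretation of α-ex-post RDP.  Let `M` be an
α-ex-post RDP mechanism, `X ∼ X'` neighbouring datasets, and let an adversary
have prior probabilities `πX, πX' > 0` for the two datasets.  The prior Bayes
factor is `Rprior = πX / πX'` and, by Bayes' theorem, the posterior Bayes factor
after observing `(y, ε)` is `Rpost (y,ε) = (πX * p X (y,ε)) / (πX' * p X' (y,ε))`
(the marginal likelihoods cancel in the ratio).  Then
`ln E_{(y,ε) ∼ M X}[ exp ((1-α) ε) * (Rpost (y,ε) / Rprior)^(α-1) ] ≤ 0`. -/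
theorem ex_post_rdp_bayesian_interpretation
    {𝒳 Y : Type*} [MeasurableSpace Y]
    (α : ℝ) (hα : 1 < α)
    (Neighbor : 𝒳 → 𝒳 → Prop) (hsymm : Symmetric Neighbor)
    (μ : Measure (Y × ℝ≥0)) [SigmaFinite μ]
    (M : 𝒳 → Measure (Y × ℝ≥0)) (hMprob : ∀ X, IsProbabilityMeasure (M X))
    (p : 𝒳 → Y × ℝ≥0 → ℝ)
    (hp_nonneg : ∀ X z, 0 ≤ p X z) (hp_meas : ∀ X, Measurable (p X))
    (hdens : ∀ X, M X = μ.withDensity fun z => ENNReal.ofReal (p X z))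
    (hexpost : ∀ X X', Neighbor X X' →
      ∫ z, Real.exp ((1 - α) * (z.2 : ℝ)) * (p X z / p X' z) ^ α ∂(M X') ≤ 1)
    (X X' : 𝒳) (hne : Neighbor X X')
    (πX πX' : ℝ) (hπX : 0 < πX) (hπX' : 0 < πX')
    (Rprior : ℝ) (hRprior : Rprior = πX / πX')
    (Rpost : Y × ℝ≥0 → ℝ)
    (hRpost : ∀ z, Rpost z = (πX * p X z) / (πX' * p X' z)) :
    Real.log (∫ z, Real.exp ((1 - α) * (z.2 : ℝ)) *
      (Rpost z / Rprior) ^ (α - 1) ∂(M X)) ≤ 0 := by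
  have hratio : ∀ z, Rpost z / Rprior = p X z / p X' z := by
    intro z
    rw [hRpost, hRprior]
    rcases eq_or_ne (p X' z) 0 with h | h
    · simp [h]
    · field_simp
  have hα0 : (0:ℝ) < α - 1 := by linarith
  -- rewrite the integrand
  have hI : (∫ z, Real.exp ((1 - α) * (z.2 : ℝ)) * (Rpost z / Rprior) ^ (α - 1) ∂(M X))
      = ∫ z, Real.exp ((1 - α) * (z.2 : ℝ)) * (p X z / p X' z) ^ (α - 1) ∂(M X) := by
    congr 1
    funext z
    rw [hratio]
  rw [hI]
  -- express both integrals over μ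
  have hdens' : ∀ X₀, M X₀ = μ.withDensity fun z => (((p X₀ z).toNNReal : ℝ≥0) : ℝ≥0∞) := by
    intro X₀; rw [hdens]; rfl
  have hmeasnn : ∀ X₀, Measurable fun z => (p X₀ z).toNNReal :=
    fun X₀ => (hp_meas X₀).real_toNNReal
  have hIX : (∫ z, Real.exp ((1 - α) * (z.2 : ℝ)) * (p X z / p X' z) ^ (α - 1) ∂(M X))
      = ∫ z, p X z * (Real.exp ((1 - α) * (z.2 : ℝ)) * (p X z / p X' z) ^ (α - 1)) ∂μ := by
    rw [hdens' X, integral_withDensity_eq_integral_smul (hmeasnn X)]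
    congr 1; funext z
    simp [NNReal.smul_def, Real.coe_toNNReal _ (hp_nonneg X z)]
  have hIX' : (∫ z, Real.exp ((1 - α) * (z.2 : ℝ)) * (p X z / p X' z) ^ α ∂(M X'))
      = ∫ z, p X' z * (Real.exp ((1 - α) * (z.2 : ℝ)) * (p X z / p X' z) ^ α) ∂μ := by
    rw [hdens' X', integral_withDensity_eq_integral_smul (hmeasnn X')]
    congr 1; funext z
    simp [NNReal.smul_def, Real.coe_toNNReal _ (hp_nonneg X' z)]
  -- pointwise identity
  have hpt : ∀ z, p X z * (Real.exp ((1 - α) * (z.2 : ℝ)) * (p X z / p X' z) ^ (α - 1))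
      = p X' z * (Real.exp ((1 - α) * (z.2 : ℝ)) * (p X z / p X' z) ^ α) := by
    intro z
    rcases eq_or_ne (p X' z) 0 with h' | h'
    · simp [h', Real.zero_rpow hα0.ne', Real.zero_rpow (by positivity : α ≠ 0)]
    · rcases eq_or_ne (p X z) 0 with h | h
      · simp [h, Real.zero_rpow hα0.ne',
          Real.zero_rpow (by positivity : α ≠ 0), zero_div]
      · have hr : p X z / p X' z ≠ 0 := div_ne_zero h h'
        have : (p X z / p X' z) ^ α = (p X z / p X' z) ^ (α - 1) * (p X z / p X' z) := by
          rw [← Real.rpow_add_one hr (α - 1)]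
          ring_nf
        rw [this]
        field_simp
  have hle : (∫ z, Real.exp ((1 - α) * (z.2 : ℝ)) * (p X z / p X' z) ^ (α - 1) ∂(M X)) ≤ 1 := by
    rw [hIX]
    calc (∫ z, p X z * (Real.exp ((1 - α) * (z.2 : ℝ)) * (p X z / p X' z) ^ (α - 1)) ∂μ)
        = ∫ z, p X' z * (Real.exp ((1 - α) * (z.2 : ℝ)) * (p X z / p X' z) ^ α) ∂μ := by
          congr 1; funext z; exact hpt z
      _ = ∫ z, Real.exp ((1 - α) * (z.2 : ℝ)) * (p X z / p X' z) ^ α ∂(M X') := hIX'.symm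
      _ ≤ 1 := hexpost X X' hne
  have hnn : (0:ℝ) ≤ ∫ z, Real.exp ((1 - α) * (z.2 : ℝ)) * (p X z / p X' z) ^ (α - 1) ∂(M X) := by
    apply integral_nonneg
    intro z
    have : 0 ≤ (p X z / p X' z) ^ (α - 1) :=
      Real.rpow_nonneg (div_nonneg (hp_nonneg X z) (hp_nonneg X' z)) _
    positivity
  exact Real.log_nonpos hnn hle
end
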